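/- Let r ≥ 1 and let R = {v ∈ ℤ² : 0 < d_∞(v, 0) ≤ r}, where d_∞((i₁,j₁),(i₂,j₂)) = max{|i₁−i₂|, |j₁−j₂|}. Then for every q ≥ 2, the supremum of R_q(X) over all R-recoverable systems X on ℤ² over alphabets of size q equals 1 − 1/(r+1)². -/

import Mathlib

/-!
Upper bound: the points of `(r+1)ℤ²` whose punctured `r`-ball fits in the `n × n` window are
about `(n/(r+1))²` in number and no one of them lies in the ball of another, so for a recoverable
system the pattern on the window is determined by its values off these points.
Lower bound: the configurations over `ZMod q` whose sum over every `(r+1) × (r+1)` tile vanishes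
form a recoverable system, and on the window all cells except one corner per tile are free.
-/

/-- An `R`-recoverable system on `ℤ²`: every symbol `x_v` is a function of the
symbols in positions `v + R`. -/
def IsRecoverable2 {Q : Type*} (R : Set (ℤ × ℤ)) (X : Set (ℤ × ℤ → Q)) : Prop :=
  ∀ v : ℤ × ℤ, ∃ f : (ℤ × ℤ → Q) → Q,
    (∀ x y : ℤ × ℤ → Q, (∀ u ∈ R, x (v + u) = y (v + u)) → f x = f y) ∧
    ∀ x ∈ X, f x = x v

/-- `|B_{[n]²}(X)|`: restrictions of elements of `X` to `{0,…,n−1}²`. -/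
noncomputable def blockCount2 {Q : Type*} (X : Set (ℤ × ℤ → Q)) (n : ℕ) : ℕ :=
  Nat.card ↥((fun x : ℤ × ℤ → Q =>
    fun p : Fin n × Fin n => x (((p.1 : ℕ) : ℤ), ((p.2 : ℕ) : ℤ))) '' X)

/-- The rate `R_q(X) = limsup_{n→∞} (1/n²) log_q |B_{[n]²}(X)|`. -/
noncomputable def rate2 (q : ℕ) {Q : Type*} (X : Set (ℤ × ℤ → Q)) : ℝ :=
  Filter.limsup (fun n : ℕ => Real.logb q (blockCount2 X n) / ((n : ℝ) ^ 2)) Filter.atTop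

open Finset Filter Topology

def puncturedLinfBall (r : ℕ) : Set (ℤ × ℤ) := {v | v ≠ 0 ∧ max |v.1| |v.2| ≤ (r : ℤ)}

theorem IsRecoverable2.eq_of_forall_add_eq {Q : Type*} {R : Set (ℤ × ℤ)} {X : Set (ℤ × ℤ → Q)}
    (hX : IsRecoverable2 R X) {x y : ℤ × ℤ → Q} (hx : x ∈ X) (hy : y ∈ X) {v : ℤ × ℤ}
    (h : ∀ u ∈ R, x (v + u) = y (v + u)) : x v = y v := by
  obtain ⟨f, hf, hfX⟩ := hX v
  rw [← hfX x hx, ← hfX y hy, hf x y h]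

section Patterns

variable {κ Q : Type*} [Fintype Q] {X : Set (κ → Q)}

def patternsOn (X : Set (κ → Q)) (B : Set κ) : Set (B → Q) := B.domRestrict '' X

theorem card_patternsOn_le [DecidableEq κ] {B D : Finset κ} (hDB : D ⊆ B)
    (hdet : ∀ x ∈ X, ∀ y ∈ X, (∀ w ∈ B \ D, x w = y w) → ∀ w ∈ D, x w = y w) :
    Nat.card (patternsOn X B) ≤ Fintype.card Q ^ (#B - #D) := by
  have hinj : Function.Injective
      fun b : patternsOn X B => fun w : (B \ D : Finset κ) => b.1 ⟨w, sdiff_subset w.2⟩ := by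
    rintro ⟨_, x, hx, rfl⟩ ⟨_, y, hy, rfl⟩ h
    have hout : ∀ w ∈ B \ D, x w = y w := fun w hw => congrFun h ⟨w, hw⟩
    refine Subtype.ext (funext fun ⟨w, hw⟩ => ?_)
    by_cases hwD : w ∈ D
    · exact hdet x hx y hy hout w hwD
    · exact hout w (mem_sdiff.2 ⟨hw, hwD⟩)
  calc Nat.card (patternsOn X B) ≤ Nat.card ((B \ D : Finset κ) → Q) :=
        Nat.card_le_card_of_injective _ hinj
    _ = Fintype.card Q ^ (#B - #D) := by
      rw [Nat.card_eq_fintype_card, Fintype.card_fun, Fintype.card_coe, card_sdiff_of_subset hDB]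

theorem pow_card_le_card_patternsOn {B F : Finset κ} (hFB : F ⊆ B)
    (hext : ∀ g : F → Q, ∃ x ∈ X, ∀ w : F, x w = g w) :
    Fintype.card Q ^ #F ≤ Nat.card (patternsOn X B) := by
  classical
  have hsurj : Function.Surjective
      fun b : patternsOn X B => fun w : F => b.1 ⟨w, hFB w.2⟩ := by
    intro g
    obtain ⟨x, hx, hxg⟩ := hext g
    exact ⟨⟨_, x, hx, rfl⟩, funext hxg⟩
  calc Fintype.card Q ^ #F = Nat.card (F → Q) := by
        rw [Nat.card_eq_fintype_card, Fintype.card_fun, Fintype.card_coe]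
    _ ≤ Nat.card (patternsOn X B) := Nat.card_le_card_of_surjective _ hsurj

end Patterns

noncomputable def squareWindow (n : ℕ) : Finset (ℤ × ℤ) := Ico 0 (n : ℤ) ×ˢ Ico 0 (n : ℤ)

theorem card_squareWindow (n : ℕ) : #(squareWindow n) = n * n := by simp [squareWindow]

theorem blockCount2_eq_card_patternsOn {Q : Type*} (X : Set (ℤ × ℤ → Q)) (n : ℕ) :
    blockCount2 X n = Nat.card (patternsOn X (squareWindow n)) := by
  let φ : Fin n × Fin n → (squareWindow n : Set (ℤ × ℤ)) :=
    fun p => ⟨((p.1 : ℕ), (p.2 : ℕ)), by simp [squareWindow]⟩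
  have hφ : Function.Surjective φ := by
    rintro ⟨⟨i, j⟩, hw⟩
    simp only [squareWindow, coe_product, coe_Ico, Set.mem_prod, Set.mem_Ico] at hw
    exact ⟨(⟨i.toNat, by omega⟩, ⟨j.toNat, by omega⟩),
      Subtype.ext (Prod.ext (by simp [φ]; omega) (by simp [φ]; omega))⟩
  rw [blockCount2, ← Nat.card_image_of_injective hφ.injective_comp_right, patternsOn,
    Set.image_image]
  rfl

def sparseGrid (s m : ℕ) : Finset (ℤ × ℤ) :=
  (range m ×ˢ range m).image fun a => ((s : ℤ) * (a.1 + 1), (s : ℤ) * (a.2 + 1))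

theorem card_sparseGrid {s : ℕ} (hs : 0 < s) (m : ℕ) : #(sparseGrid s m) = m * m := by
  rw [sparseGrid, card_image_of_injective _ ?_, card_product, card_range]
  intro a b h
  simp only [Prod.mk.injEq, mul_eq_mul_left_iff, Nat.cast_eq_zero, hs.ne', or_false] at h
  exact Prod.ext (by exact_mod_cast add_right_cancel h.1) (by exact_mod_cast add_right_cancel h.2)

theorem le_mul_succ_and_mul_succ_add_le {s n a : ℕ} (ha : a < n / s - 1) :
    (s : ℤ) ≤ s * (a + 1) ∧ (s : ℤ) * (a + 1) + s ≤ n := by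
  have h : s * (a + 1) + s ≤ n :=
    calc s * (a + 1) + s = (a + 2) * s := by ring
      _ ≤ n / s * s := Nat.mul_le_mul_right s (by omega)
      _ ≤ n := Nat.div_mul_le_self n s
  exact ⟨by exact_mod_cast Nat.le_mul_of_pos_right s a.succ_pos, by exact_mod_cast h⟩

theorem dvd_and_bounds_of_mem_sparseGrid {s n : ℕ} {w : ℤ × ℤ}
    (hw : w ∈ sparseGrid s (n / s - 1)) :
    (s : ℤ) ∣ w.1 ∧ (s : ℤ) ∣ w.2 ∧ s ≤ w.1 ∧ w.1 + s ≤ n ∧ s ≤ w.2 ∧ w.2 + s ≤ n := by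
  obtain ⟨a, ha, rfl⟩ := mem_image.1 hw
  simp only [mem_product, mem_range] at ha
  obtain ⟨h1, h1'⟩ := le_mul_succ_and_mul_succ_add_le ha.1
  obtain ⟨h2, h2'⟩ := le_mul_succ_and_mul_succ_add_le ha.2
  exact ⟨dvd_mul_right _ _, dvd_mul_right _ _, h1, h1', h2, h2'⟩

theorem sparseGrid_subset_squareWindow {s : ℕ} (hs : 0 < s) (n : ℕ) :
    sparseGrid s (n / s - 1) ⊆ squareWindow n := by
  intro w hw
  obtain ⟨-, -, h1, h1', h2, h2'⟩ := dvd_and_bounds_of_mem_sparseGrid hw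
  simp only [squareWindow, mem_product, mem_Ico]
  omega

theorem add_mem_squareWindow_sdiff_sparseGrid {r s n : ℕ} (hrs : r < s) {w u : ℤ × ℤ}
    (hw : w ∈ sparseGrid s (n / s - 1)) (hu : u ∈ puncturedLinfBall r) :
    w + u ∈ squareWindow n \ sparseGrid s (n / s - 1) := by
  obtain ⟨hd1, hd2, h1, h1', h2, h2'⟩ := dvd_and_bounds_of_mem_sparseGrid hw
  obtain ⟨hu0, hur⟩ := hu
  rw [max_le_iff, abs_le, abs_le] at hur
  refine mem_sdiff.2 ⟨?_, fun hmem => hu0 ?_⟩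
  · simp only [squareWindow, mem_product, mem_Ico, Prod.fst_add, Prod.snd_add]
    omega
  obtain ⟨he1, he2, -⟩ := dvd_and_bounds_of_mem_sparseGrid hmem
  have hsmall : ∀ x : ℤ, -r ≤ x → x ≤ r → |x| < s := fun x h h' => abs_lt.2 ⟨by omega, by omega⟩
  exact Prod.ext (Int.eq_zero_of_abs_lt_dvd ((dvd_add_right hd1).1 he1) (hsmall _ hur.1.1 hur.1.2))
    (Int.eq_zero_of_abs_lt_dvd ((dvd_add_right hd2).1 he2) (hsmall _ hur.2.1 hur.2.2))

theorem blockCount2_le_of_isRecoverable2 {Q : Type*} [Fintype Q] {r : ℕ} {X : Set (ℤ × ℤ → Q)}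
    (hX : IsRecoverable2 (puncturedLinfBall r) X) (n : ℕ) :
    blockCount2 X n ≤ Fintype.card Q ^ (n * n - (n / (r + 1) - 1) * (n / (r + 1) - 1)) := by
  classical
  rw [blockCount2_eq_card_patternsOn, ← card_squareWindow, ← card_sparseGrid r.succ_pos]
  exact card_patternsOn_le (sparseGrid_subset_squareWindow r.succ_pos n) fun x hx y hy hxy w hw =>
    hX.eq_of_forall_add_eq hx hy fun u hu =>
      hxy _ (add_mem_squareWindow_sdiff_sparseGrid r.lt_succ_self hw hu)

theorem Int.ediv_eq_iff_mul_le_and_lt {a b c : ℤ} (hb : 0 < b) :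
    a / b = c ↔ b * c ≤ a ∧ a < b * c + b := by
  rw [le_antisymm_iff, ← Int.lt_add_one_iff, Int.ediv_lt_iff_lt_mul hb, Int.le_ediv_iff_mul_le hb]
  constructor <;> rintro ⟨h1, h2⟩ <;> constructor <;> linarith

section Tiles

variable {s : ℕ}

noncomputable def tile (s : ℕ) (t : ℤ × ℤ) : Finset (ℤ × ℤ) :=
  Ico (s * t.1) (s * t.1 + s) ×ˢ Ico (s * t.2) (s * t.2 + s)

def tileIndex (s : ℕ) (v : ℤ × ℤ) : ℤ × ℤ := (v.1 / s, v.2 / s)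

def tileCorner (s : ℕ) (t : ℤ × ℤ) : ℤ × ℤ := (s * t.1 + (s - 1), s * t.2 + (s - 1))

theorem mem_tile_iff_tileIndex_eq (hs : 0 < s) {v t : ℤ × ℤ} :
    v ∈ tile s t ↔ tileIndex s v = t := by
  have hs' : (0 : ℤ) < s := by exact_mod_cast hs
  simp only [tile, tileIndex, mem_product, mem_Ico, Prod.ext_iff, Int.ediv_eq_iff_mul_le_and_lt hs']

theorem tileCorner_mem_tile (hs : 0 < s) (t : ℤ × ℤ) : tileCorner s t ∈ tile s t := by
  simp only [tileCorner, tile, mem_product, mem_Ico]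
  omega

theorem sub_mem_puncturedLinfBall_of_mem_tile {r : ℕ} {t v w : ℤ × ℤ}
    (hv : v ∈ tile (r + 1) t) (hw : w ∈ tile (r + 1) t) (hne : w ≠ v) :
    w - v ∈ puncturedLinfBall r := by
  simp only [tile, mem_product, mem_Ico] at hv hw
  refine ⟨sub_ne_zero.2 hne, ?_⟩
  simp only [Prod.fst_sub, Prod.snd_sub, max_le_iff, abs_le]
  push_cast at hv hw
  omega

end Tiles

def zeroTileSums (G : Type*) [AddCommGroup G] (s : ℕ) : Set (ℤ × ℤ → G) :=
  {x | ∀ t, ∑ w ∈ tile s t, x w = 0}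

theorem isRecoverable2_zeroTileSums (G : Type*) [AddCommGroup G] (r : ℕ) :
    IsRecoverable2 (puncturedLinfBall r) (zeroTileSums G (r + 1)) := by
  intro v
  have hv : v ∈ tile (r + 1) (tileIndex (r + 1) v) := (mem_tile_iff_tileIndex_eq r.succ_pos).2 rfl
  refine ⟨fun x => -∑ w ∈ (tile (r + 1) (tileIndex (r + 1) v)).erase v, x w,
    fun x y hxy => ?_, fun x hx => ?_⟩
  · refine congrArg Neg.neg (sum_congr rfl fun w hw => ?_)
    obtain ⟨hne, hw⟩ := mem_erase.1 hw
    simpa using hxy _ (sub_mem_puncturedLinfBall_of_mem_tile hv hw hne)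
  · rw [neg_eq_iff_add_eq_zero, add_comm, add_sum_erase _ _ hv]
    exact hx _

section FillCorners

variable {G : Type*} [AddCommGroup G] {s : ℕ}

noncomputable def fillCorners (s : ℕ) (h : ℤ × ℤ → G) (w : ℤ × ℤ) : G :=
  if w = tileCorner s (tileIndex s w) then -∑ u ∈ (tile s (tileIndex s w)).erase w, h u
  else h w

theorem fillCorners_of_ne {h : ℤ × ℤ → G} {w : ℤ × ℤ} (hw : w ≠ tileCorner s (tileIndex s w)) :
    fillCorners s h w = h w :=
  if_neg hw

theorem fillCorners_mem_zeroTileSums (hs : 0 < s) (h : ℤ × ℤ → G) :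
    fillCorners s h ∈ zeroTileSums G s := by
  intro t
  have hidx : ∀ w ∈ tile s t, tileIndex s w = t := fun w => (mem_tile_iff_tileIndex_eq hs).1
  have hc := tileCorner_mem_tile hs t
  have hrest : ∀ w ∈ (tile s t).erase (tileCorner s t), fillCorners s h w = h w := by
    intro w hw
    obtain ⟨hne, hw⟩ := mem_erase.1 hw
    exact fillCorners_of_ne (by rwa [hidx w hw])
  rw [← add_sum_erase _ _ hc, sum_congr rfl hrest, fillCorners, hidx _ hc, if_pos rfl,
    neg_add_cancel]

end FillCorners

def windowCorners (s n : ℕ) : Finset (ℤ × ℤ) :=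
  (range (n / s) ×ˢ range (n / s)).image fun a => tileCorner s (a.1, a.2)

theorem card_windowCorners_le (s n : ℕ) : #(windowCorners s n) ≤ n / s * (n / s) :=
  card_image_le.trans (by rw [card_product, card_range])

theorem exists_lt_div_of_eq_mul_ediv_add {s n : ℕ} {i : ℤ} (hi : 0 ≤ i) (hin : i < n)
    (hcorner : i = s * (i / s) + (s - 1)) : ∃ a < n / s, (a : ℤ) = i / s := by
  rcases Nat.eq_zero_or_pos s with rfl | hs
  · simp at hcorner
    omega
  have hq : 0 ≤ i / s := Int.ediv_nonneg hi (by positivity)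
  refine ⟨(i / s).toNat, Nat.lt_of_succ_le ((Nat.le_div_iff_mul_le hs).2 ?_),
    Int.toNat_of_nonneg hq⟩
  zify
  rw [Int.toNat_of_nonneg hq]
  linarith

theorem mem_windowCorners {s n : ℕ} {w : ℤ × ℤ} (hw : w ∈ squareWindow n)
    (hcorner : w = tileCorner s (tileIndex s w)) : w ∈ windowCorners s n := by
  simp only [squareWindow, mem_product, mem_Ico] at hw
  simp only [tileCorner, tileIndex, Prod.ext_iff] at hcorner
  obtain ⟨a, ha, ha'⟩ := exists_lt_div_of_eq_mul_ediv_add hw.1.1 hw.1.2 hcorner.1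
  obtain ⟨b, hb, hb'⟩ := exists_lt_div_of_eq_mul_ediv_add hw.2.1 hw.2.2 hcorner.2
  refine mem_image.2 ⟨(a, b), mem_product.2 ⟨mem_range.2 ha, mem_range.2 hb⟩, ?_⟩
  simp only [tileCorner, ha', hb']
  exact Prod.ext hcorner.1.symm hcorner.2.symm

theorem pow_le_blockCount2_zeroTileSums (G : Type*) [AddCommGroup G] [Fintype G] {s : ℕ}
    (hs : 0 < s) (n : ℕ) :
    Fintype.card G ^ (n * n - n / s * (n / s)) ≤ blockCount2 (zeroTileSums G s) n := by
  classical
  set F := squareWindow n \ windowCorners s n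
  have hF : n * n - n / s * (n / s) ≤ #F := by
    have h1 : #(squareWindow n) - #(windowCorners s n) ≤ #F := le_card_sdiff _ _
    have h2 := card_windowCorners_le s n
    rw [card_squareWindow] at h1
    omega
  rw [blockCount2_eq_card_patternsOn]
  refine (Nat.pow_le_pow_right Fintype.card_pos hF).trans
    (pow_card_le_card_patternsOn sdiff_subset fun g => ?_)
  refine ⟨fillCorners s (fun w => if hw : w ∈ F then g ⟨w, hw⟩ else 0),
    fillCorners_mem_zeroTileSums hs _, fun ⟨w, hw⟩ => ?_⟩
  obtain ⟨hwin, hnc⟩ := mem_sdiff.1 hw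
  rw [fillCorners_of_ne fun hc => hnc (mem_windowCorners hwin hc), dif_pos hw]

theorem Real.logb_natCast_le_of_le_pow {q m e : ℕ} (hq : 1 < q) (h : m ≤ q ^ e) :
    Real.logb q m ≤ e := by
  have hq' : (1 : ℝ) < q := by exact_mod_cast hq
  rcases Nat.eq_zero_or_pos m with rfl | hm
  · simp
  calc Real.logb q m ≤ Real.logb q ((q : ℝ) ^ e) :=
        Real.logb_le_logb_of_le hq' (by exact_mod_cast hm) (by exact_mod_cast h)
    _ = e := by rw [Real.logb_pow, Real.logb_self_eq_one hq', mul_one]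

theorem Real.le_logb_natCast_of_pow_le {q m e : ℕ} (hq : 1 < q) (h : q ^ e ≤ m) :
    (e : ℝ) ≤ Real.logb q m := by
  have hq' : (1 : ℝ) < q := by exact_mod_cast hq
  calc (e : ℝ) = Real.logb q ((q : ℝ) ^ e) := by
        rw [Real.logb_pow, Real.logb_self_eq_one hq', mul_one]
    _ ≤ Real.logb q m := Real.logb_le_logb_of_le hq' (by positivity) (by exact_mod_cast h)

section Rate

variable {Q : Type*} {q : ℕ} {X : Set (ℤ × ℤ → Q)}

theorem logb_blockCount2_div_nonneg (q : ℕ) (X : Set (ℤ × ℤ → Q)) (n : ℕ) :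
    0 ≤ Real.logb q (blockCount2 X n) / (n : ℝ) ^ 2 := by
  unfold Real.logb
  positivity

theorem rate2_le_of_eventually_le {u : ℕ → ℝ} {L : ℝ} (hu : Tendsto u atTop (𝓝 L))
    (h : ∀ᶠ n in atTop, Real.logb q (blockCount2 X n) / (n : ℝ) ^ 2 ≤ u n) : rate2 q X ≤ L :=
  (limsup_le_limsup h (isCoboundedUnder_le_of_le atTop (logb_blockCount2_div_nonneg q X))
    hu.isBoundedUnder_le).trans_eq hu.limsup_eq

theorem tendsto_one_sub_inv_sub_two_div_sq (s : ℝ) :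
    Tendsto (fun n : ℕ => 1 - (1 / s - 2 / n) ^ 2) atTop (𝓝 (1 - 1 / s ^ 2)) := by
  have h := ((tendsto_const_div_atTop_nhds_zero_nat (2 : ℝ)).const_sub (1 / s)).pow 2
    |>.const_sub 1
  rwa [sub_zero, div_pow, one_pow] at h

theorem logb_blockCount2_div_le [Fintype Q] (hq : 1 < q) (hQ : Fintype.card Q = q) {r : ℕ}
    (hX : IsRecoverable2 (puncturedLinfBall r) X) {n : ℕ} (hn : 2 * (r + 1) ≤ n) :
    Real.logb q (blockCount2 X n) / (n : ℝ) ^ 2 ≤ 1 - (1 / ((r : ℝ) + 1) - 2 / n) ^ 2 := by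
  set m := n / (r + 1) - 1
  have hs : (0 : ℝ) < r + 1 := by positivity
  have hn0 : (0 : ℝ) < n := by exact_mod_cast (by omega : 0 < n)
  have hmn : m ≤ n := (Nat.sub_le _ _).trans (Nat.div_le_self _ _)
  have hlog : Real.logb q (blockCount2 X n) ≤ (n : ℝ) ^ 2 - (m : ℝ) ^ 2 := by
    have := Real.logb_natCast_le_of_le_pow hq (hQ ▸ blockCount2_le_of_isRecoverable2 hX n)
    rwa [Nat.cast_sub (Nat.mul_le_mul hmn hmn), Nat.cast_mul, Nat.cast_mul, ← sq, ← sq] at this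
  have hm : (n : ℝ) / (r + 1) - 2 ≤ m := by
    have h1 : 1 ≤ n / (r + 1) := (Nat.le_div_iff_mul_le r.succ_pos).2 (by omega)
    have h2 : (n : ℝ) < (n / (r + 1) : ℕ) * (r + 1) + (r + 1) := by
      exact_mod_cast Nat.lt_div_mul_add (a := n) r.succ_pos
    rw [Nat.cast_sub h1, Nat.cast_one, div_sub' hs.ne', div_le_iff₀ hs]
    linarith
  have hm0 : 0 ≤ (n : ℝ) / (r + 1) - 2 := by
    rw [sub_nonneg, le_div_iff₀ hs]
    exact_mod_cast hn
  rw [div_le_iff₀ (by positivity)]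
  calc Real.logb q (blockCount2 X n) ≤ (n : ℝ) ^ 2 - ((n : ℝ) / (r + 1) - 2) ^ 2 := by
        nlinarith
    _ = (1 - (1 / ((r : ℝ) + 1) - 2 / n) ^ 2) * (n : ℝ) ^ 2 := by
        field_simp

theorem rate2_le_of_isRecoverable2 [Fintype Q] (hq : 1 < q) (hQ : Fintype.card Q = q) {r : ℕ}
    (hX : IsRecoverable2 (puncturedLinfBall r) X) : rate2 q X ≤ 1 - 1 / ((r : ℝ) + 1) ^ 2 :=
  rate2_le_of_eventually_le (tendsto_one_sub_inv_sub_two_div_sq _) <|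
    (eventually_ge_atTop _).mono fun _ hn => logb_blockCount2_div_le hq hQ hX hn

end Rate

section ZeroTileSumsRate

variable {G : Type*} [AddCommGroup G] [Fintype G] {q : ℕ}

theorem one_sub_inv_sq_le_logb_blockCount2_div (hq : 1 < q) (hG : Fintype.card G = q) {s : ℕ}
    (hs : 0 < s) {n : ℕ} (hn : 0 < n) :
    1 - 1 / (s : ℝ) ^ 2 ≤ Real.logb q (blockCount2 (zeroTileSums G s) n) / (n : ℝ) ^ 2 := by
  set k := n / s
  have hs' : (0 : ℝ) < s := by exact_mod_cast hs
  have hkn : k ≤ n := Nat.div_le_self n s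
  have hlog : (n : ℝ) ^ 2 - (k : ℝ) ^ 2 ≤ Real.logb q (blockCount2 (zeroTileSums G s) n) := by
    have := Real.le_logb_natCast_of_pow_le hq (hG ▸ pow_le_blockCount2_zeroTileSums G hs n)
    rwa [Nat.cast_sub (Nat.mul_le_mul hkn hkn), Nat.cast_mul, Nat.cast_mul, ← sq, ← sq] at this
  have hk : (k : ℝ) ≤ n / s := Nat.cast_div_le
  rw [le_div_iff₀ (by positivity)]
  calc (1 - 1 / (s : ℝ) ^ 2) * (n : ℝ) ^ 2 = (n : ℝ) ^ 2 - ((n : ℝ) / s) ^ 2 := by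
        field_simp
    _ ≤ Real.logb q (blockCount2 (zeroTileSums G s) n) := by
        nlinarith [pow_le_pow_left₀ (Nat.cast_nonneg k) hk 2]

theorem rate2_zeroTileSums (hq : 1 < q) (hG : Fintype.card G = q) (r : ℕ) :
    rate2 q (zeroTileSums G (r + 1)) = 1 - 1 / ((r : ℝ) + 1) ^ 2 := by
  have hlower : ∀ᶠ n : ℕ in atTop, 1 - 1 / ((r : ℝ) + 1) ^ 2 ≤
      Real.logb q (blockCount2 (zeroTileSums G (r + 1)) n) / (n : ℝ) ^ 2 :=
    (eventually_gt_atTop 0).mono fun _ hn => by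
      exact_mod_cast one_sub_inv_sq_le_logb_blockCount2_div hq hG r.succ_pos hn
  have hupper := (eventually_ge_atTop _).mono fun _ hn =>
    logb_blockCount2_div_le hq hG (isRecoverable2_zeroTileSums G r) hn
  exact (tendsto_of_tendsto_of_tendsto_of_le_of_le' tendsto_const_nhds
    (tendsto_one_sub_inv_sub_two_div_sq _) hlower hupper).limsup_eq

end ZeroTileSumsRate

theorem stmt13_general (r : ℕ) (q : ℕ) (hq : 2 ≤ q) :
    sSup {x : ℝ | ∃ (Q : Type) (_ : Fintype Q), Fintype.card Q = q ∧
        ∃ X : Set (ℤ × ℤ → Q),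
          IsRecoverable2 {v : ℤ × ℤ | v ≠ 0 ∧ max |v.1| |v.2| ≤ (r : ℤ)} X ∧
          rate2 q X = x} =
      1 - 1 / ((r : ℝ) + 1) ^ 2 := by
  have : NeZero q := ⟨by omega⟩
  refine IsGreatest.csSup_eq ⟨⟨ZMod q, inferInstance, ZMod.card q, zeroTileSums (ZMod q) (r + 1),
    isRecoverable2_zeroTileSums _ r, rate2_zeroTileSums hq (ZMod.card q) r⟩, ?_⟩
  rintro _ ⟨Q, _, hQ, X, hX, rfl⟩
  exact rate2_le_of_isRecoverable2 hq hQ hX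

/-- For the `l∞`-ball recovery set of radius `r`, the supremum of rates of
recoverable systems on `ℤ²` over alphabets of size `q` is `1 − 1/(r+1)²`. -/
theorem stmt13 (r : ℕ) (hr : 1 ≤ r) (q : ℕ) (hq : 2 ≤ q) :
    sSup {x : ℝ | ∃ (Q : Type) (_ : Fintype Q), Fintype.card Q = q ∧
        ∃ X : Set (ℤ × ℤ → Q),
          IsRecoverable2 {v : ℤ × ℤ | v ≠ 0 ∧ max |v.1| |v.2| ≤ (r : ℤ)} X ∧
          rate2 q X = x} =
      1 - 1 / ((r : ℝ) + 1) ^ 2 :=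
  stmt13_general r q hq
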